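/- Let F := (y³−z³)(x²−τ²yz)³ and G := (x³−z³)(−xz+τy²)³ in ℂ[x,y,z]. Then (Ω − τ·Ξ) ∧ (G·dF − F·dG) = 0, i.e. all three coefficient polynomials of this wedge vanish identically. In other words, F/G is a rational first integral of the Lins Neto foliation ℱ_{−τ}, which is an elliptic pencil of nonics. -/

import Mathlib

/-!
Only `τ³ = 1` matters. The substitution `y ↦ τ² y` carries the `τ`-free pencil
`F₀ = (y³ - z³)(x² - yz)³`, `G₀ = (x³ - z³)(y² - xz)³` to `F`, `G`, and carries the coefficients of
`Ω - Ξ` to those of `Ω - τ Ξ` up to the factors `(τ, 1, τ)`; these are `τ` times the chain-rule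
factors `(1, τ², 1)` picked up by `G dF - F dG`, so the wedge is rescaled compatibly. For the
`τ`-free pencil the two forms are proportional:
`G₀ dF₀ - F₀ dG₀ = 3 ((x² - yz)(y² - xz)(z² - xy))² (Ω - Ξ)`.
-/

open MvPolynomial

noncomputable section

/-- τ = e^{2πi/3}, a primitive cube root of unity. -/
def τ : ℂ := Complex.exp (2 * Real.pi * Complex.I / 3)

/-- The polynomial ring ℂ[x,y,z]. -/
abbrev R3 : Type := MvPolynomial (Fin 3) ℂ

def Xv : R3 := X 0
def Yv : R3 := X 1
def Zv : R3 := X 2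

/-- The 1-form Ω (coefficients of dx, dy, dz). -/
def Om : Fin 3 → R3 :=
  ![Zv * (Yv - Zv) * (Zv ^ 2 + Yv ^ 2 + Yv * Zv) * Yv,
    -(Zv * (Xv - Zv) * (Xv ^ 2 + Zv * Xv + Zv ^ 2) * Xv),
    Xv * Yv * (Xv - Yv) * (Xv ^ 2 + Xv * Yv + Yv ^ 2)]

/-- The 1-form Ξ (coefficients of dx, dy, dz). -/
def Xi : Fin 3 → R3 :=
  ![-((Yv - Zv) * (Zv ^ 2 + Yv ^ 2 + Yv * Zv) * Xv ^ 2),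
    (Xv - Zv) * (Xv ^ 2 + Zv * Xv + Zv ^ 2) * Yv ^ 2,
    -(Zv ^ 2 * (Xv - Yv) * (Xv ^ 2 + Xv * Yv + Yv ^ 2))]

/-- The coefficients of `ω ∧ η` all vanish. -/
def WedgeZero (ω η : Fin 3 → R3) : Prop :=
  ∀ i j : Fin 3, ω i * η j - ω j * η i = 0

/-- The 1-form `G·dF − F·dG`. -/
def pencilForm (F G : R3) : Fin 3 → R3 :=
  fun i => G * pderiv i F - F * pderiv i G

def Fpol : R3 := (Yv ^ 3 - Zv ^ 3) * (Xv ^ 2 - C τ ^ 2 * Yv * Zv) ^ 3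

def Gpol : R3 := (Xv ^ 3 - Zv ^ 3) * (-(Xv * Zv) + C τ * Yv ^ 2) ^ 3

section DiagonalScaling

variable {σ R : Type*} [CommSemiring R]

noncomputable def diagScale (c : σ → R) : MvPolynomial σ R →ₐ[R] MvPolynomial σ R :=
  aeval fun i => C (c i) * X i

@[simp]
theorem diagScale_X (c : σ → R) (i : σ) : diagScale c (X i) = C (c i) * X i :=
  aeval_X _ i

theorem pderiv_diagScale (c : σ → R) (i : σ) (p : MvPolynomial σ R) :
    pderiv i (diagScale c p) = C (c i) * diagScale c (pderiv i p) := by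
  induction p using MvPolynomial.induction_on with
  | C a => simp [diagScale]
  | add p q hp hq => simp only [map_add, hp, hq, mul_add]
  | mul_X p j hp =>
    simp only [map_mul, Derivation.leibniz, smul_eq_mul, hp, diagScale_X, pderiv_C, map_add]
    by_cases hj : j = i
    · subst hj
      simp only [pderiv_X_self, map_one]
      ring
    · simp only [pderiv_X_of_ne hj, map_zero]
      ring

end DiagonalScaling

theorem wedgeZero_mul_right (ω : Fin 3 → R3) (K : R3) : WedgeZero ω fun i => K * ω i :=
  fun i j => by ring

theorem WedgeZero.map_rescale {ω η : Fin 3 → R3} (h : WedgeZero ω η) (f : R3 →+* R3) (u : R3)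
    (v : Fin 3 → R3) : WedgeZero (fun i => u * v i * f (ω i)) fun i => v i * f (η i) := by
  intro i j
  calc u * v i * f (ω i) * (v j * f (η j)) - u * v j * f (ω j) * (v i * f (η i))
      = u * v i * v j * f (ω i * η j - ω j * η i) := by rw [map_sub, map_mul, map_mul]; ring
    _ = 0 := by rw [h i j, map_zero, mul_zero]

theorem pencilForm_diagScale (c : Fin 3 → ℂ) (F G : R3) (i : Fin 3) :
    pencilForm (diagScale c F) (diagScale c G) i = C (c i) * diagScale c (pencilForm F G i) := by
  simp only [pencilForm, pderiv_diagScale, map_sub, map_mul]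
  ring

def Fpol₀ : R3 := (Yv ^ 3 - Zv ^ 3) * (Xv ^ 2 - Yv * Zv) ^ 3

def Gpol₀ : R3 := (Xv ^ 3 - Zv ^ 3) * (Yv ^ 2 - Xv * Zv) ^ 3

theorem pencilForm_Fpol₀_Gpol₀ (i : Fin 3) :
    pencilForm Fpol₀ Gpol₀ i =
      3 * ((Xv ^ 2 - Yv * Zv) * (Yv ^ 2 - Xv * Zv) * (Zv ^ 2 - Xv * Yv)) ^ 2 * (Om i - Xi i) := by
  fin_cases i <;>
  · simp only [pencilForm, Fpol₀, Gpol₀, Om, Xi, Xv, Yv, Zv, Fin.isValue, Fin.zero_eta,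
      Fin.mk_one, Fin.reduceFinMk, Matrix.cons_val, Matrix.cons_val_zero, Matrix.cons_val_one,
      Derivation.leibniz, Derivation.leibniz_pow, map_sub, pderiv_X, Pi.single_eq_same, ne_eq,
      Fin.reduceEq, not_false_eq_true, Pi.single_eq_of_ne, smul_eq_mul, nsmul_eq_mul]
    ring

theorem wedgeZero_Fpol₀_Gpol₀ : WedgeZero (fun i => Om i - Xi i) (pencilForm Fpol₀ Gpol₀) := by
  rw [funext pencilForm_Fpol₀_Gpol₀]
  exact wedgeZero_mul_right _ _

theorem τ_pow_three : τ ^ 3 = 1 := by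
  simpa [τ] using (Complex.isPrimitiveRoot_exp 3 (by norm_num)).pow_eq_one

section CubeRootOfUnity

variable {A : Type*} [CommRing A] {t : A}

theorem sq_mul_pow_three_of_pow_three (ht : t ^ 3 = 1) (a : A) : (t ^ 2 * a) ^ 3 = a ^ 3 := by
  linear_combination (t ^ 3 + 1) * a ^ 3 * ht

theorem sq_mul_sq_of_pow_three (ht : t ^ 3 = 1) (a : A) : (t ^ 2 * a) ^ 2 = t * a ^ 2 := by
  linear_combination t * a ^ 2 * ht

end CubeRootOfUnity

theorem C_τ_pow_three : (C τ : R3) ^ 3 = 1 := by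
  rw [← map_pow, τ_pow_three, map_one]

theorem Fpol_eq_diagScale : Fpol = diagScale ![1, τ ^ 2, 1] Fpol₀ := by
  simp only [Fpol, Fpol₀, Xv, Yv, Zv, map_mul, map_sub, map_pow, diagScale_X]
  simp [sq_mul_pow_three_of_pow_three C_τ_pow_three]

theorem Gpol_eq_diagScale : Gpol = diagScale ![1, τ ^ 2, 1] Gpol₀ := by
  simp only [Gpol, Gpol₀, Xv, Yv, Zv, map_mul, map_sub, map_pow, diagScale_X]
  simp [sq_mul_sq_of_pow_three C_τ_pow_three, neg_add_eq_sub]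

theorem Om_sub_τ_mul_Xi (i : Fin 3) :
    Om i - C τ * Xi i = C τ * C (![1, τ ^ 2, 1] i) * diagScale ![1, τ ^ 2, 1] (Om i - Xi i) := by
  have ht := C_τ_pow_three
  have hy := sq_mul_pow_three_of_pow_three ht (X 1)
  fin_cases i <;>
    simp only [Om, Xi, Xv, Yv, Zv, Fin.isValue, Fin.zero_eta, Fin.mk_one, Fin.reduceFinMk,
      Matrix.cons_val, Matrix.cons_val_zero, Matrix.cons_val_one, C_1, one_mul, map_add,
      map_sub, map_neg, map_mul, map_pow, diagScale_X]
  · linear_combination -(X 1 ^ 3 - X 2 ^ 3) * X 2 * X 1 * ht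
      - (C τ ^ 3 * X 2 * X 1 + C τ * X 0 ^ 2) * hy
  · linear_combination (X 0 ^ 3 - X 2 ^ 3) * (X 2 * X 0 + C τ * (C τ ^ 3 + 1) * X 1 ^ 2) * ht
  · linear_combination -(X 0 ^ 3 - X 1 ^ 3) * X 0 * X 1 * ht
      + (C τ ^ 3 * X 0 * X 1 + C τ * X 2 ^ 2) * hy

theorem stmt_15 : WedgeZero (fun i => Om i - C τ * Xi i) (pencilForm Fpol Gpol) := by
  have hη : pencilForm Fpol Gpol =
      fun i => C (![1, τ ^ 2, 1] i) * diagScale ![1, τ ^ 2, 1] (pencilForm Fpol₀ Gpol₀ i) := by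
    funext i
    rw [Fpol_eq_diagScale, Gpol_eq_diagScale, pencilForm_diagScale]
  rw [funext Om_sub_τ_mul_Xi, hη]
  exact wedgeZero_Fpol₀_Gpol₀.map_rescale (diagScale ![1, τ ^ 2, 1]).toRingHom (C τ) _
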